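/- arXiv:1909.09799 — 2 statements merged into one kernel-verified Lean document; each statement's English description precedes it below -/
import Mathlib

section
/- Let G be a graph that is a Nash equilibrium of the network creation game, let v be a vertex owning edges e_1=(v,v_1) and e_2=(v,v_2) in a biconnected component H, and let u ∈ V(H). Define A^i as the set of vertices z such that some shortest path in G from z to u passes through v with predecessor v_i. If A^i is nonempty, then the subgraph of G induced by A^i is connected. -/
/-- The walk `p` from `z` to `u` passes through `v` with predecessor `x`,
i.e. it decomposes as a walk to `x`, the edge `x v`, and a walk from `v` to `u`. -/
def PassesThroughWithPred {V : Type*} (G : SimpleGraph V) {z u : V}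
    (p : G.Walk z u) (x v : V) : Prop :=
  ∃ (q : G.Walk z x) (h : G.Adj x v) (r : G.Walk v u),
    p = q.append (SimpleGraph.Walk.cons h r)

section Aux
open SimpleGraph Walk

variable {V : Type*} {G : SimpleGraph V}

lemma aux_strip_pass {z w u x v : V}
    (h : G.Adj z w) (p' : G.Walk w u) (hwv : w ≠ v)
    (hpass : PassesThroughWithPred G (Walk.cons h p') x v) :
    PassesThroughWithPred G p' x v := by
  obtain ⟨q, h', r', heq⟩ := hpass
  cases q with
  | nil =>
    rw [Walk.nil_append] at heq
    have := congrArg (fun (t : G.Walk z u) => t.getVert 1) heq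
    simp at this
    exact absurd this hwv
  | cons h₂ q₂ =>
    rename_i w₂
    rw [Walk.cons_append] at heq
    have hw : w = w₂ := by
      have := congrArg (fun (t : G.Walk z u) => t.getVert 1) heq
      simpa using this
    subst hw
    injection heq with e1 e2 e3 e4
    exact ⟨q₂, h', r', e4⟩

lemma aux_main (hG : G.Connected) (u v v₁ v₂ : V) (A : Set V) (r : G.Walk v u) :
    ∀ {z y : V} (q : G.Walk z y),
      A = {z : V |
        (∀ p : G.Walk z u, p.length = G.dist z u →
          PassesThroughWithPred G p v₁ v ∨ PassesThroughWithPred G p v₂ v) ∧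
        ∃ p : G.Walk z u, p.length = G.dist z u ∧ PassesThroughWithPred G p y v} →
      ∀ (hq : G.Adj y v), z ∈ A →
      (q.append (Walk.cons hq r)).length = G.dist z u →
      ∃ (hyA : y ∈ A), ∀ (hz : z ∈ A),
        (G.induce A).Reachable ⟨z, hz⟩ ⟨y, hyA⟩ := by
  intro z y q
  induction q with
  | nil => exact fun _ _ hz _ => ⟨hz, fun _ => Reachable.refl _⟩
  | cons h'' q'' ih =>
    rename_i z w y
    intro hA hq hz hlen
    rw [Walk.cons_append, Walk.length_cons] at hlen
    set M := (q''.append (Walk.cons hq r)).length with hM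
    have hdw_le : G.dist w u ≤ M := SimpleGraph.dist_le _
    have hdz_le : G.dist z u ≤ 1 + G.dist w u := by
      calc G.dist z u ≤ G.dist z w + G.dist w u := hG.dist_triangle
        _ ≤ 1 + G.dist w u := by
            have : G.dist z w ≤ 1 := by
              simpa using SimpleGraph.dist_le (Walk.cons h'' Walk.nil)
            omega
    have hdw : G.dist w u = M := by omega
    have hwv : w ≠ v := by
      intro hwvEq
      subst hwvEq
      have hr1 : G.dist w u ≤ r.length := SimpleGraph.dist_le r
      have hr2 : M = q''.length + (r.length + 1) := by
        rw [hM, Walk.length_append, Walk.length_cons]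
      omega
    have hwA : w ∈ A := by
      rw [hA]
      refine ⟨fun p' hp' => ?_, ⟨q''.append (Walk.cons hq r), hdw.symm, q'', hq, r, rfl⟩⟩
      have hconslen : (Walk.cons h'' p').length = G.dist z u := by
        rw [Walk.length_cons, hp']; omega
      have hzA := hA ▸ hz
      rcases hzA.1 (Walk.cons h'' p') hconslen with hp | hp
      · exact Or.inl (aux_strip_pass h'' p' hwv hp)
      · exact Or.inr (aux_strip_pass h'' p' hwv hp)
    obtain ⟨hyA, hreach⟩ := ih hA hq hwA (by omega)
    refine ⟨hyA, fun hz' => ?_⟩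
    have hadj : (G.induce A).Adj ⟨z, hz'⟩ ⟨w, hwA⟩ := by simpa using h''
    exact hadj.reachable.trans (hreach hwA)

end Aux

theorem stmt_16 {V : Type*} [Fintype V] (G : SimpleGraph V) (hG : G.Connected)
    (u v v₁ v₂ vi : V) (h₁ : G.Adj v v₁) (h₂ : G.Adj v v₂) (hne : v₁ ≠ v₂)
    (hvi : vi = v₁ ∨ vi = v₂) (A : Set V)
    (hA : A = {z : V |
      (∀ p : G.Walk z u, p.length = G.dist z u →
        PassesThroughWithPred G p v₁ v ∨ PassesThroughWithPred G p v₂ v) ∧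
      ∃ p : G.Walk z u, p.length = G.dist z u ∧ PassesThroughWithPred G p vi v}) :
    A.Nonempty → (G.induce A).Connected := by
  intro hAne
  have key : ∀ (a : ↥A), ∃ (hviA : vi ∈ A),
      (G.induce A).Reachable a ⟨vi, hviA⟩ := by
    rintro ⟨z, hz⟩
    have hz' := hA ▸ hz
    obtain ⟨p, hp, q, hadj, r, rfl⟩ := hz'.2
    obtain ⟨hviA, hreach⟩ := aux_main hG u v v₁ v₂ A r q hA hadj hz hp
    exact ⟨hviA, hreach hz⟩
  rw [SimpleGraph.connected_iff]
  refine ⟨fun a b => ?_, ⟨⟨hAne.choose, hAne.choose_spec⟩⟩⟩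
  obtain ⟨ha, hra⟩ := key a
  obtain ⟨hb, hrb⟩ := key b
  exact hra.trans hrb.symm
end

section
/- Let u be a fixed vertex of a graph G, and for each vertex v with two owned edges e_1, e_2 define A_{e_1,e_2}(v) as the set of vertices z such that every shortest path in G from z to u passes through v with predecessor v_1 or v_2 (the other endpoints of e_1, e_2). If v, v' are vertices with d_G(u,v) = d_G(u,v') and {e_1,e_2}, {e_1',e_2'} are two distinct (disjoint-as-sets) pairs of edges owned by v and v' respectively, then A_{e_1,e_2}(v) and A_{e_1',e_2'}(v') are disjoint. -/
namespace PassesThroughWithPred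

open SimpleGraph

variable {V : Type*} {G : SimpleGraph V} {z u x v x' v' : V} {p : G.Walk z u}

theorem getVert_eq_of_length_eq_dist (hp : p.length = G.dist z u)
    (h : PassesThroughWithPred G p x v) :
    p.getVert (p.length - G.dist v u) = v ∧ p.getVert (p.length - G.dist v u - 1) = x := by
  obtain ⟨q, hxv, r, rfl⟩ := h
  obtain ⟨s, hs⟩ := r.reachable.exists_walk_length_eq_dist
  have hlen : (q.append (.cons hxv r)).length = q.length + r.length + 1 := by
    simp only [Walk.length_append, Walk.length_cons]; omega
  have hshort : G.dist z u ≤ q.length + s.length + 1 := by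
    simpa only [Walk.length_append, Walk.length_cons, ← add_assoc]
      using dist_le (q.append (.cons hxv s))
  have hr : r.length = G.dist v u := le_antisymm (by omega) (dist_le r)
  have hidx : (q.append (.cons hxv r)).length - G.dist v u = q.length + 1 := by omega
  rw [hidx, Nat.add_sub_cancel, Walk.getVert_append, Walk.getVert_append]
  simp

theorem eq_of_dist_eq (hp : p.length = G.dist z u) (h : PassesThroughWithPred G p x v)
    (h' : PassesThroughWithPred G p x' v') (hd : G.dist v u = G.dist v' u) :
    v = v' ∧ x = x' := by
  obtain ⟨hv, hx⟩ := h.getVert_eq_of_length_eq_dist hp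
  obtain ⟨hv', hx'⟩ := h'.getVert_eq_of_length_eq_dist hp
  rw [hd] at hv hx
  exact ⟨hv.symm.trans hv', hx.symm.trans hx'⟩

end PassesThroughWithPred

theorem stmt_17_general {V : Type*} (G : SimpleGraph V) (hG : G.Connected)
    (u v v' v₁ v₂ v₁' v₂' : V)
    (hdisj : ({s(v, v₁), s(v, v₂)} : Set (Sym2 V)) ∩ {s(v', v₁'), s(v', v₂')} = ∅)
    (hdist : G.dist u v = G.dist u v')
    (A A' : Set V)
    (hA : A = {z : V | ∀ p : G.Walk z u, p.length = G.dist z u →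
      PassesThroughWithPred G p v₁ v ∨ PassesThroughWithPred G p v₂ v})
    (hA' : A' = {z : V | ∀ p : G.Walk z u, p.length = G.dist z u →
      PassesThroughWithPred G p v₁' v' ∨ PassesThroughWithPred G p v₂' v'}) :
    Disjoint A A' := by
  rw [hA, hA', Set.disjoint_left]
  intro z hz hz'
  obtain ⟨p, hp⟩ := hG.exists_walk_length_eq_dist z u
  have hd : G.dist v u = G.dist v' u := by
    rw [SimpleGraph.dist_comm, hdist, SimpleGraph.dist_comm]
  obtain ⟨x, hx, h⟩ : ∃ x ∈ ({v₁, v₂} : Set V), PassesThroughWithPred G p x v := by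
    rcases hz p hp with h | h
    exacts [⟨v₁, .inl rfl, h⟩, ⟨v₂, .inr rfl, h⟩]
  obtain ⟨x', hx', h'⟩ : ∃ x' ∈ ({v₁', v₂'} : Set V), PassesThroughWithPred G p x' v' := by
    rcases hz' p hp with h' | h'
    exacts [⟨v₁', .inl rfl, h'⟩, ⟨v₂', .inr rfl, h'⟩]
  obtain ⟨rfl, rfl⟩ := h.eq_of_dist_eq hp h' hd
  rw [← Set.image_pair, ← Set.image_pair] at hdisj
  exact Set.eq_empty_iff_forall_notMem.mp hdisj s(v, x)
    ⟨Set.mem_image_of_mem _ hx, Set.mem_image_of_mem _ hx'⟩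

theorem stmt_17 {V : Type*} [Fintype V] (G : SimpleGraph V) (hG : G.Connected)
    (u v v' v₁ v₂ v₁' v₂' : V)
    (ha₁ : G.Adj v v₁) (ha₂ : G.Adj v v₂) (ha₁' : G.Adj v' v₁') (ha₂' : G.Adj v' v₂')
    (hpair : s(v, v₁) ≠ s(v, v₂)) (hpair' : s(v', v₁') ≠ s(v', v₂'))
    (hdisj : ({s(v, v₁), s(v, v₂)} : Set (Sym2 V)) ∩ {s(v', v₁'), s(v', v₂')} = ∅)
    (hdist : G.dist u v = G.dist u v')
    (A A' : Set V)
    (hA : A = {z : V | ∀ p : G.Walk z u, p.length = G.dist z u →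
      PassesThroughWithPred G p v₁ v ∨ PassesThroughWithPred G p v₂ v})
    (hA' : A' = {z : V | ∀ p : G.Walk z u, p.length = G.dist z u →
      PassesThroughWithPred G p v₁' v' ∨ PassesThroughWithPred G p v₂' v'}) :
    Disjoint A A' :=
  stmt_17_general G hG u v v' v₁ v₂ v₁' v₂' hdisj hdist A A' hA hA'
end
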